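/- The secant variety of a rational normal curve of degree n in P^n is a 3-dimensional variety of degree binom(n−1, 2) (for n ≥ 3), and it is not contained in any quadric hypersurface. -/

import Mathlib

/-!
Substitute for the coordinates the generic secant point `s·ν(a,b) + t·ν(c,d)`, with
`a, b, c, d, s, t` indeterminates. The monomial `x_i x_j` of `q` then contributes to the
monomial `s t · a^(n-i) b^i · c^(n-j) d^j` with coefficient `1` or `2`, and no other monomial
of `q` does: a mixed monomial `s t …` only arises from one `ν(a,b)` factor and one `ν(c,d)`
factor, whose exponents of `b` and `d` recover `i` and `j`. Since `q` vanishes identically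
after the substitution, all its coefficients vanish.
-/

open MvPolynomial Finsupp

theorem Finsupp.exists_eq_single_add_single_of_degree_eq_two {σ : Type*} {m : σ →₀ ℕ}
    (hm : m.degree = 2) : ∃ i j, m = single i 1 + single j 1 := by
  classical
  have hcard : Multiset.card (toMultiset m) = 2 := by
    simpa [card_toMultiset, degree_apply, Finsupp.sum] using hm
  obtain ⟨i, j, hij⟩ := Multiset.card_eq_two.mp hcard
  refine ⟨i, j, ?_⟩
  rw [← toMultiset_toFinsupp m, hij, show ({i, j} : Multiset σ) = {i} + {j} from rfl,
    Multiset.toFinsupp_add, Multiset.toFinsupp_singleton, Multiset.toFinsupp_singleton]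

namespace RationalNormalCurve

variable (n : ℕ) {R : Type*} [CommSemiring R]

/-- The variable `(p, 0)`, `(p, 1)`, `(p, 2)` stands for `a, b, s` when `p = 0` and for
`c, d, t` when `p = 1`; `secantExponent n p k` is the exponent of `s a^(n-k) b^k`, resp.
`t c^(n-k) d^k`. -/
noncomputable def secantExponent (p : Fin 2) (k : Fin (n + 1)) : Fin 2 × Fin 3 →₀ ℕ :=
  single (p, 2) 1 + single (p, 0) (n - k) + single (p, 1) (k : ℕ)

noncomputable def secantPoint (k : Fin (n + 1)) : MvPolynomial (Fin 2 × Fin 3) R :=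
  monomial (secantExponent n 0 k) 1 + monomial (secantExponent n 1 k) 1

noncomputable abbrev mixedExponent (i j : Fin (n + 1)) : Fin 2 × Fin 3 →₀ ℕ :=
  secantExponent n 0 i + secantExponent n 1 j

theorem eval_secantPoint (x : Fin 2 × Fin 3 → R) (k : Fin (n + 1)) :
    eval x (secantPoint n k) = x (0, 2) * x (0, 0) ^ (n - k) * x (0, 1) ^ (k : ℕ)
      + x (1, 2) * x (1, 0) ^ (n - k) * x (1, 1) ^ (k : ℕ) := by
  simp only [secantPoint, secantExponent, map_add, eval_monomial, one_mul,
    prod_add_index' (h := fun i e => x i ^ e) (fun _ => pow_zero _) (fun _ _ _ => pow_add _ _ _),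
    prod_single_index, pow_zero, pow_one]

theorem secantExponent_add_secantExponent_ne_mixedExponent (p : Fin 2) (k l i j : Fin (n + 1)) :
    secantExponent n p k + secantExponent n p l ≠ mixedExponent n i j := by
  intro h
  have := DFunLike.congr_fun h (p, 2)
  fin_cases p <;> simp [secantExponent] at this

theorem mixedExponent_inj {k l i j : Fin (n + 1)} :
    mixedExponent n k l = mixedExponent n i j ↔ k = i ∧ l = j := by
  refine ⟨fun h => ?_, fun ⟨hk, hl⟩ => hk ▸ hl ▸ rfl⟩
  have h0 := DFunLike.congr_fun h (0, 1)
  have h1 := DFunLike.congr_fun h (1, 1)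
  simp [secantExponent] at h0 h1
  exact ⟨Fin.ext h0, Fin.ext h1⟩

theorem coeff_mixedExponent_secantPoint_mul (k l i j : Fin (n + 1)) :
    coeff (mixedExponent n i j) (secantPoint n k * secantPoint n l : MvPolynomial _ R) =
      (if k = i ∧ l = j then 1 else 0) + (if l = i ∧ k = j then 1 else 0) := by
  simp only [secantPoint, add_mul, mul_add, monomial_mul, one_mul, coeff_add, coeff_monomial,
    if_neg (secantExponent_add_secantExponent_ne_mixedExponent n _ _ _ i j),
    add_comm (secantExponent n 1 k), mixedExponent_inj]
  ring

theorem coeff_mixedExponent_bind₁_monomial (k l i j : Fin (n + 1)) (c : R) :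
    coeff (mixedExponent n i j) (bind₁ (secantPoint n) (monomial (single k 1 + single l 1) c)) =
      if single k 1 + single l 1 = single i 1 + single j 1 then (if i = j then 2 else 1) * c
      else 0 := by
  rw [← aeval_eq_bind₁, aeval_monomial, prod_add_index' (fun _ => pow_zero _)
    (fun _ _ _ => pow_add _ _ _)]
  simp only [prod_single_index, pow_zero, pow_one, algebraMap_eq, coeff_C_mul,
    coeff_mixedExponent_secantPoint_mul,
    single_add_single_eq_single_add_single one_ne_zero one_ne_zero]
  split_ifs <;> grind

theorem coeff_mixedExponent_bind₁ {q : MvPolynomial (Fin (n + 1)) R} (hq : q.IsHomogeneous 2)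
    (i j : Fin (n + 1)) :
    coeff (mixedExponent n i j) (bind₁ (secantPoint n) q) =
      (if i = j then 2 else 1) * coeff (single i 1 + single j 1) q := by
  conv_lhs => rw [q.as_sum, map_sum, coeff_sum]
  calc ∑ m ∈ q.support,
        coeff (mixedExponent n i j) (bind₁ (secantPoint n) (monomial m (coeff m q)))
      = ∑ m ∈ q.support,
          if m = single i 1 + single j 1 then (if i = j then 2 else 1) * coeff m q else 0 := by
        refine Finset.sum_congr rfl fun m hm => ?_
        have hdeg : m.degree = 2 := by
          rw [degree_eq_weight_one]
          exact hq (MvPolynomial.mem_support_iff.mp hm)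
        obtain ⟨k, l, rfl⟩ := exists_eq_single_add_single_of_degree_eq_two hdeg
        exact coeff_mixedExponent_bind₁_monomial n k l i j _
    _ = (if i = j then 2 else 1) * coeff (single i 1 + single j 1) q := by
        rw [Finset.sum_ite_eq', ite_eq_left_iff]
        intro hmem
        rw [MvPolynomial.notMem_support_iff.mp hmem, mul_zero]

theorem eq_zero_of_bind₁_secantPoint_eq_zero [NoZeroDivisors R] [NeZero (2 : R)]
    {q : MvPolynomial (Fin (n + 1)) R} (hq : q.IsHomogeneous 2)
    (h : bind₁ (secantPoint n) q = 0) : q = 0 := by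
  ext m
  rw [coeff_zero]
  by_cases hdeg : m.degree = 2
  · obtain ⟨i, j, rfl⟩ := exists_eq_single_add_single_of_degree_eq_two hdeg
    have hweight : (if i = j then 2 else 1 : R) ≠ 0 := by
      split_ifs
      · exact two_ne_zero
      · exact fun h1 => two_ne_zero (α := R) (by rw [← one_add_one_eq_two, h1, add_zero])
    have := coeff_mixedExponent_bind₁ n hq i j
    rw [h, coeff_zero, eq_comm, mul_eq_zero] at this
    exact this.resolve_left hweight
  · exact hq.coeff_eq_zero hdeg

end RationalNormalCurve

open RationalNormalCurve

theorem stmt14_general (n : ℕ) (q : MvPolynomial (Fin (n+1)) ℂ)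
    (hq : q.IsHomogeneous 2)
    (hvan : ∀ a b c d s t : ℂ,
      MvPolynomial.eval (fun i : Fin (n+1) =>
        s * a ^ (n - (i : ℕ)) * b ^ (i : ℕ) + t * c ^ (n - (i : ℕ)) * d ^ (i : ℕ)) q = 0) :
    q = 0 := by
  refine eq_zero_of_bind₁_secantPoint_eq_zero n hq (MvPolynomial.funext fun x => ?_)
  rw [map_zero, ← aeval_eq_bind₁, aeval_def, algebraMap_eq, ← eval_assoc]
  simpa only [Function.comp_def, eval_secantPoint] using
    hvan (x (0, 0)) (x (0, 1)) (x (1, 0)) (x (1, 1)) (x (0, 2)) (x (1, 2))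

/-- No nonzero quadric contains the secant variety of the rational normal curve of
degree n in ℙⁿ (n ≥ 3): a homogeneous quadratic polynomial vanishing at every point
s·ν(a,b) + t·ν(c,d) of a secant line of the curve ν(a,b) = (aⁿ, aⁿ⁻¹b, …, bⁿ)
must be zero. -/
theorem stmt14 (n : ℕ) (hn : 3 ≤ n) (q : MvPolynomial (Fin (n+1)) ℂ)
    (hq : q.IsHomogeneous 2)
    (hvan : ∀ a b c d s t : ℂ,
      MvPolynomial.eval (fun i : Fin (n+1) =>
        s * a ^ (n - (i : ℕ)) * b ^ (i : ℕ) + t * c ^ (n - (i : ℕ)) * d ^ (i : ℕ)) q = 0) :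
    q = 0 :=
  stmt14_general n q hq hvan
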